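/- Let r ≥ 1 and let m ∈ ⋀^r M₀ be a ℤ-linear combination of basis elements [b]^r_λ with λ of length exactly r (i.e. λ_r > 0). Then σ̄₋(z)m = (−1)^r z^{−r} σ̄₊(z)(σ̄_{−r} m) (as an identity of coefficients of the two Laurent expansions in ⋀^r M₀). -/

import Mathlib

open ExteriorAlgebra

/-- The free `ℤ`-module `M₀` with basis indexed by `ℕ`. -/
abbrev M₀ : Type := ℕ →₀ ℤ

/-- The exterior algebra `⋀M₀`. -/
abbrev ExtM₀ : Type := ExteriorAlgebra ℤ M₀

/-- The basis vectors `b i` of `M₀`, seen inside the exterior algebra. -/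
noncomputable def b (i : ℕ) : ExtM₀ := ExteriorAlgebra.ι ℤ (Finsupp.single i 1)

/-- A family `D : ℕ → End(⋀M)` is a Hasse–Schmidt family if the series
`𝒟(z) = Σ Dₙ zⁿ` is an algebra homomorphism `⋀M → ⋀M[[z]]`. -/
def IsHSFamily {R : Type*} [CommRing R] {M : Type*} [AddCommGroup M] [Module R M]
    (D : ℕ → Module.End R (ExteriorAlgebra R M)) : Prop :=
  (∀ (n : ℕ) (x y : ExteriorAlgebra R M),
      D n (x * y) = ∑ p ∈ Finset.HasAntidiagonal.antidiagonal n, (D p.1 x) * (D p.2 y)) ∧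
  (∀ n : ℕ, D n (1 : ExteriorAlgebra R M) = if n = 0 then 1 else 0)

/-- `σ₊(z) = Σ σᵢ zⁱ`: the HS derivation with `σᵢ bⱼ = b_{i+j}`. -/
def IsSigmaPlus (D : ℕ → Module.End ℤ ExtM₀) : Prop :=
  IsHSFamily D ∧ ∀ i j : ℕ, D i (b j) = b (i + j)

/-- `σ̄₊(z) = Σ (-1)ⁱ σ̄ᵢ zⁱ`: the (coefficientwise) HS derivation with
`σ̄₊(z) bⱼ = bⱼ - b_{j+1} z`.  Here `D i` is the coefficient of `zⁱ`, i.e. `D i = (-1)ⁱ σ̄ᵢ`. -/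
def IsSigmaBarPlus (D : ℕ → Module.End ℤ ExtM₀) : Prop :=
  IsHSFamily D ∧ (∀ j, D 0 (b j) = b j) ∧ (∀ j, D 1 (b j) = -b (j + 1)) ∧
    (∀ i j, 2 ≤ i → D i (b j) = 0)

/-- `σ₋(z) = Σ σ₋ᵢ z⁻ⁱ`: the HS derivation with `σ₋ᵢ bⱼ = b_{j-i}` (`0` if `i > j`).
Here `D i` is the coefficient of `z⁻ⁱ`. -/
def IsSigmaMinus (D : ℕ → Module.End ℤ ExtM₀) : Prop :=
  IsHSFamily D ∧ ∀ i j : ℕ, D i (b j) = if i ≤ j then b (j - i) else 0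

/-- `σ̄₋(z) = Σ (-1)ⁱ σ̄₋ᵢ z⁻ⁱ`: the HS derivation with `σ̄₋(z) bⱼ = bⱼ - b_{j-1} z⁻¹`
(with `b_{-1} = 0`).  Here `D i` is the coefficient of `z⁻ⁱ`. -/
def IsSigmaBarMinus (D : ℕ → Module.End ℤ ExtM₀) : Prop :=
  IsHSFamily D ∧ (∀ j, D 0 (b j) = b j) ∧
    (∀ j, D 1 (b j) = -(if 1 ≤ j then b (j - 1) else 0)) ∧
    (∀ i j, 2 ≤ i → D i (b j) = 0)

/-- The basis element `[b]^r_λ = b_{λ_r} ∧ b_{1+λ_{r-1}} ∧ ⋯ ∧ b_{r-1+λ_1}` of `⋀^r M₀`,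
for a partition `λ` encoded as an antitone function `lam : Fin r → ℕ` (`lam 0 = λ₁`). -/
noncomputable def bwedge (r : ℕ) (lam : Fin r → ℕ) : ExtM₀ :=
  (List.ofFn fun i : Fin r => b (i.1 + lam i.rev)).prod

/-- The Grassmann cone `𝒢_r ⊆ ⋀^r M₀` of decomposable tensors. -/
def GrassmannCone (r : ℕ) : Set ExtM₀ :=
  {x | ∃ v : Fin r → M₀, x = (List.ofFn fun i : Fin r => ExteriorAlgebra.ι ℤ (v i)).prod}

/-- The dual basis functional `β_j ∈ M₀*`, `β_j (b_i) = δ_{ij}`. -/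
noncomputable def beta (j : ℕ) : Module.Dual ℤ M₀ := Finsupp.lapply j

/-- Contraction `β ⌟ x` of `x ∈ ⋀M₀` against a functional `β ∈ M₀^∨`: the unique odd
derivation of degree `-1` of `⋀M₀` extending `β`. -/
noncomputable def contract (β : Module.Dual ℤ M₀) (x : ExtM₀) : ExtM₀ :=
  CliffordAlgebra.contractLeft β x


section Helpers

open Finset

lemma ofFn_prod_smul :
    ∀ (n : ℕ) (c : Fin n → ℤ) (g : Fin n → ExtM₀),
      (List.ofFn fun i => c i • g i).prod = (∏ i, c i) • (List.ofFn g).prod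
  | 0, c, g => by simp
  | n+1, c, g => by
      rw [List.ofFn_succ, List.ofFn_succ, List.prod_cons, List.prod_cons,
        Fin.prod_univ_succ, ofFn_prod_smul n (fun i => c i.succ) (fun i => g i.succ),
        smul_mul_smul_comm]

lemma hs_mul_left (D : ℕ → Module.End ℤ ExtM₀) (hD : IsHSFamily D)
    (a y e0 e1 : ExtM₀) (h0 : D 0 a = e0) (h1 : D 1 a = e1)
    (h2 : ∀ n, 2 ≤ n → D n a = 0) (n : ℕ) :
    D n (a * y) = e0 * D n y + (if n = 0 then 0 else e1 * D (n-1) y) := by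
  rw [hD.1 n]
  cases n with
  | zero => simp [h0]
  | succ m =>
    rw [Finset.Nat.sum_antidiagonal_eq_sum_range_succ_mk,
      Finset.sum_range_succ', Finset.sum_range_succ']
    rw [Finset.sum_eq_zero (fun k (_ : k ∈ Finset.range m) => by
      rw [h2 (k+1+1) (by omega), zero_mul])]
    simp only [zero_add, Nat.sub_zero, Nat.add_sub_cancel, h0, h1,
      if_neg (Nat.succ_ne_zero m)]
    exact add_comm _ _

lemma hs_prod (D : ℕ → Module.End ℤ ExtM₀) (hD : IsHSFamily D) :
    ∀ (r : ℕ) (x u v : Fin r → ExtM₀),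
      (∀ i, D 0 (x i) = u i) → (∀ i, D 1 (x i) = v i) →
      (∀ n i, 2 ≤ n → D n (x i) = 0) →
      ∀ n, D n (List.ofFn x).prod =
        ∑ ε : Fin r → Bool,
          if (∑ i, if ε i then 1 else 0) = n then
            (List.ofFn fun i => if ε i then v i else u i).prod else 0
  | 0, x, u, v, h0, h1, h2, n => by
      simp only [List.ofFn_zero, List.prod_nil, hD.2 n]
      rw [Finset.univ_unique, Finset.sum_singleton]
      simp only [Finset.univ_eq_empty, Finset.sum_empty, List.ofFn_zero, List.prod_nil]
      by_cases h : n = 0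
      · simp [h]
      · simp [h, Ne.symm h]
  | r+1, x, u, v, h0, h1, h2, n => by
      have IH := hs_prod D hD r (fun i => x i.succ) (fun i => u i.succ) (fun i => v i.succ)
        (fun i => h0 i.succ) (fun i => h1 i.succ) (fun n i => h2 n i.succ)
      rw [List.ofFn_succ, List.prod_cons,
        hs_mul_left D hD (x 0) _ (u 0) (v 0) (h0 0) (h1 0) (fun n hn => h2 n 0 hn) n,
        IH n]
      rw [← Equiv.sum_comp (Fin.consEquiv fun _ : Fin (r+1) => Bool)
        (fun ε : Fin (r+1) → Bool => if (∑ i, if ε i then 1 else 0) = n then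
              (List.ofFn fun i => if ε i then v i else u i).prod else 0)]
      rw [Fintype.sum_prod_type, Fintype.sum_bool]
      simp only [Fin.consEquiv_apply, Fin.sum_univ_succ, Fin.cons_zero, Fin.cons_succ,
        List.ofFn_succ, List.prod_cons, eq_self_iff_true, if_true, Bool.false_eq_true,
        if_false, zero_add]
      cases n with
      | zero =>
        rw [if_pos rfl, add_zero,
          Finset.sum_eq_zero (fun (ε : Fin r → Bool) _ =>
            if_neg (fun hc : (1 + ∑ i, if ε i then 1 else 0) = 0 => by omega)), zero_add,
          Finset.mul_sum]
        exact Finset.sum_congr rfl fun ε _ => by rw [mul_ite, mul_zero]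
      | succ m =>
        rw [if_neg (Nat.succ_ne_zero m), Nat.add_sub_cancel, IH m]
        conv_lhs => rw [add_comm]
        congr 1
        · rw [Finset.mul_sum]
          exact Finset.sum_congr rfl fun ε _ => by
            rw [mul_ite, mul_zero]; exact if_congr (by omega) rfl rfl
        · rw [Finset.mul_sum]
          exact Finset.sum_congr rfl fun ε _ => by rw [mul_ite, mul_zero]

end Helpers

section MoreHelpers

lemma cnt_le (r : ℕ) (ε : Fin r → Bool) : (∑ i, if ε i then 1 else 0) ≤ r := by
  calc (∑ i, if ε i then 1 else 0) ≤ ∑ _i : Fin r, 1 :=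
        Finset.sum_le_sum (fun i _ => by split <;> simp)
    _ = r := by simp

lemma sign_prod (r : ℕ) (ε : Fin r → Bool) :
    (∏ i, if ε i then (-1 : ℤ) else 1) = (-1) ^ (∑ i, if ε i then 1 else 0) := by
  rw [← Finset.prod_pow_eq_pow_sum]
  exact Finset.prod_congr rfl fun i _ => by split <;> simp

lemma sign_prod' (r : ℕ) (ε : Fin r → Bool) :
    (∏ i, if ε i then (1:ℤ) else -1) = (-1) ^ (∑ i, if ε i then 0 else 1) := by
  rw [← Finset.prod_pow_eq_pow_sum]
  exact Finset.prod_congr rfl fun i _ => by split <;> simp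

end MoreHelpers

/--
let `r ≥ 1` and let `m ∈ ⋀^r M₀` be a `ℤ`-linear combination of basis elements
`[b]^r_λ` with `λ` of length exactly `r` (i.e. `λ_r > 0`).  Then the Laurent-series identity
`σ̄₋(z) m = (-1)^r z^{-r} σ̄₊(z)(σ̄_{-r} m)` holds, coefficient by coefficient (coefficient
of `z^k`, `k ∈ ℤ`).  Here `sbp i` is the coefficient of `zⁱ` in `σ̄₊(z)`, `sbm i` is the
coefficient of `z⁻ⁱ` in `σ̄₋(z)`, and `σ̄_{-r} m = (-1)^r • sbm r m`.
-/
theorem sigmaBarMinus_eq_shifted_sigmaBarPlus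
    (r : ℕ) (hr : 1 ≤ r) (m : ExtM₀)
    (hm : m ∈ Submodule.span ℤ
      {x : ExtM₀ | ∃ lam : Fin r → ℕ, Antitone lam ∧ 1 ≤ lam ⟨r - 1, by omega⟩ ∧
        x = bwedge r lam})
    (sbp : ℕ → Module.End ℤ ExtM₀) (hsbp : IsSigmaBarPlus sbp)
    (sbm : ℕ → Module.End ℤ ExtM₀) (hsbm : IsSigmaBarMinus sbm) :
    ∀ k : ℤ,
      (if k ≤ 0 then sbm (-k).toNat m else 0) =
        (if -(r : ℤ) ≤ k then
          ((-1 : ℤ) ^ r) • sbp (k + (r : ℤ)).toNat (((-1 : ℤ) ^ r) • sbm r m)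
        else 0) := by
  induction hm using Submodule.span_induction with
  | zero => intro k; simp
  | add x y hx hy ihx ihy =>
      intro k
      have h1 := ihx k; have h2 := ihy k
      have e1 : (if k ≤ 0 then sbm (-k).toNat (x + y) else 0)
          = (if k ≤ 0 then sbm (-k).toNat x else 0)
            + (if k ≤ 0 then sbm (-k).toNat y else 0) := by
        split_ifs <;> simp
      have e2 : (if -(r:ℤ) ≤ k then
            ((-1:ℤ)^r) • sbp (k+(r:ℤ)).toNat (((-1:ℤ)^r) • sbm r (x+y)) else 0)
          = (if -(r:ℤ) ≤ k then
              ((-1:ℤ)^r) • sbp (k+(r:ℤ)).toNat (((-1:ℤ)^r) • sbm r x) else 0)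
            + (if -(r:ℤ) ≤ k then
              ((-1:ℤ)^r) • sbp (k+(r:ℤ)).toNat (((-1:ℤ)^r) • sbm r y) else 0) := by
        split_ifs <;> simp [smul_add]
      rw [e1, e2, h1, h2]
  | smul a x hx ih =>
      intro k
      have h1 := ih k
      calc (if k ≤ 0 then sbm (-k).toNat (a • x) else 0)
          = a • (if k ≤ 0 then sbm (-k).toNat x else 0) := by
            split_ifs
            · exact map_smul _ a x
            · exact (smul_zero a).symm
        _ = a • (if -(r:ℤ) ≤ k then
              ((-1:ℤ)^r) • sbp (k+(r:ℤ)).toNat (((-1:ℤ)^r) • sbm r x) else 0) := by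
            rw [h1]
        _ = _ := by
            split_ifs
            · rw [map_smul (sbm r) a x, smul_comm ((-1:ℤ)^r) a (sbm r x),
                map_smul (sbp ((k + (r:ℤ)).toNat)) a (((-1:ℤ)^r) • sbm r x),
                smul_comm ((-1:ℤ)^r) a (sbp ((k + (r:ℤ)).toNat) (((-1:ℤ)^r) • sbm r x))]
            · exact smul_zero a
  | mem x hx =>
      obtain ⟨lam, hanti, hpos, rfl⟩ := hx
      have hj : ∀ i : Fin r, 1 ≤ i.1 + lam i.rev := by
        intro i
        have hlt := i.isLt
        have h := hanti (a := i.rev) (b := ⟨r-1, by omega⟩)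
          (by rw [Fin.le_def, Fin.val_rev]; show r - (i.1+1) ≤ r - 1; omega)
        exact le_trans (le_trans hpos h) (Nat.le_add_left _ _)
      have hexp_m : ∀ n, sbm n (bwedge r lam) =
          ∑ ε : Fin r → Bool, if (∑ i, if ε i then 1 else 0) = n then
            (List.ofFn fun i : Fin r =>
              if ε i then -b (i.1 + lam i.rev - 1) else b (i.1 + lam i.rev)).prod
          else 0 :=
        hs_prod sbm hsbm.1 r _ _ _ (fun i => hsbm.2.1 _)
          (fun i => by rw [hsbm.2.2.1, if_pos (hj i)])
          (fun n i h => hsbm.2.2.2 n _ h)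
      have hexp_X : ∀ n, sbp n (List.ofFn fun i : Fin r => b (i.1 + lam i.rev - 1)).prod =
          ∑ ε : Fin r → Bool, if (∑ i, if ε i then 1 else 0) = n then
            (List.ofFn fun i : Fin r =>
              if ε i then -b (i.1 + lam i.rev) else b (i.1 + lam i.rev - 1)).prod
          else 0 :=
        hs_prod sbp hsbp.1 r _ _ _ (fun i => hsbp.2.1 _)
          (fun i => by
            rw [hsbp.2.2.1,
              show i.1 + lam i.rev - 1 + 1 = i.1 + lam i.rev from by have := hj i; omega])
          (fun n i h => hsbp.2.2.2 n _ h)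
      have hall : ∀ ε : Fin r → Bool, (∑ i, if ε i then 1 else 0) = r →
          ε = fun _ => true := by
        intro ε hc
        funext i
        show ε i = true
        by_contra hi
        have hf : ε i = false := by simpa using hi
        have h1 : ∑ j ∈ Finset.univ.erase i, (if ε j then 1 else 0) + (if ε i then 1 else 0)
            = ∑ j, (if ε j then 1 else 0) := Finset.sum_erase_add _ _ (Finset.mem_univ i)
        have h2 : ∑ j ∈ Finset.univ.erase i, (if ε j then (1:ℕ) else 0)
            ≤ (Finset.univ.erase i).card := by
          have := Finset.sum_le_card_nsmul (Finset.univ.erase i)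
            (fun j => if ε j then (1:ℕ) else 0) 1 (fun j _ => by cases hε : ε j <;> simp [hε])
          simpa using this
        have h3 : (Finset.univ.erase i).card = r - 1 := by
          rw [Finset.card_erase_of_mem (Finset.mem_univ i)]; simp
        rw [hf] at h1
        simp only [Bool.false_eq_true, if_false, add_zero] at h1
        omega
      have htop : sbm r (bwedge r lam) =
          ((-1:ℤ)^r) • (List.ofFn fun i : Fin r => b (i.1 + lam i.rev - 1)).prod := by
        rw [hexp_m r, Finset.sum_eq_single (fun _ : Fin r => true)]
        · rw [if_pos (by simp),
            show (List.ofFn fun i : Fin r => if (fun _ : Fin r => true) i then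
                -b (i.1 + lam i.rev - 1) else b (i.1 + lam i.rev))
              = List.ofFn fun i : Fin r => ((-1:ℤ)) • b (i.1 + lam i.rev - 1) from
              congrArg List.ofFn (funext fun i => by simp),
            ofFn_prod_smul r (fun _ => (-1:ℤ)) (fun i => b (i.1 + lam i.rev - 1))]
          congr 1
          simp
        · intro ε _ hne
          exact if_neg (fun hc => hne (hall ε hc))
        · simp
      have hXX : ((-1:ℤ)^r) • sbm r (bwedge r lam) =
          (List.ofFn fun i : Fin r => b (i.1 + lam i.rev - 1)).prod := by
        rw [htop, smul_smul, ← mul_pow]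
        norm_num
      intro k
      by_cases hk0 : k ≤ 0
      · by_cases hkr : -(r:ℤ) ≤ k
        · rw [if_pos hk0, if_pos hkr]
          set n := (-k).toNat with hn
          have hnr : n ≤ r := by omega
          have htn : (k + (r:ℤ)).toNat = r - n := by omega
          rw [hXX, htn, hexp_m n, hexp_X (r-n), Finset.smul_sum]
          refine Fintype.sum_bijective (fun (ε : Fin r → Bool) (i : Fin r) => !(ε i))
            (Function.Involutive.bijective (fun ε => by funext i; simp)) _ _ (fun ε => ?_)
          show (if (∑ i, if ε i then 1 else 0) = n then
              (List.ofFn fun i : Fin r =>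
                if ε i then -b (i.1 + lam i.rev - 1) else b (i.1 + lam i.rev)).prod
            else 0)
            = (-1:ℤ)^r • (if (∑ i, if !(ε i) then 1 else 0) = r - n then
              (List.ofFn fun i : Fin r =>
                if !(ε i) then -b (i.1 + lam i.rev) else b (i.1 + lam i.rev - 1)).prod
            else 0)
          have hd : (∑ i, if !(ε i) then 1 else 0) = (∑ i, if ε i then 0 else 1) :=
            Finset.sum_congr rfl fun i _ => by cases ε i <;> simp
          have hcd : (∑ i, if ε i then 1 else 0) + (∑ i, if ε i then 0 else 1) = r := by
            have hstep : ∀ i ∈ Finset.univ,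
                ((if ε i then (1:ℕ) else 0) + (if ε i then 0 else 1)) = 1 :=
              fun i _ => by cases ε i <;> simp
            rw [← Finset.sum_add_distrib, Finset.sum_congr rfl hstep]
            simp
          have eA : (List.ofFn fun i : Fin r =>
                if ε i then -b (i.1 + lam i.rev - 1) else b (i.1 + lam i.rev)).prod
              = ((-1:ℤ) ^ (∑ i, if ε i then 1 else 0)) •
                (List.ofFn fun i : Fin r =>
                  if ε i then b (i.1 + lam i.rev - 1) else b (i.1 + lam i.rev)).prod := by
            rw [← sign_prod r ε, ← ofFn_prod_smul r (fun i => if ε i then (-1:ℤ) else 1)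
                (fun i => if ε i then b (i.1 + lam i.rev - 1) else b (i.1 + lam i.rev))]
            exact congrArg List.prod (congrArg List.ofFn (funext fun i => by
              cases hε : ε i <;> simp [hε]))
          have eB : (List.ofFn fun i : Fin r =>
                if !(ε i) then -b (i.1 + lam i.rev) else b (i.1 + lam i.rev - 1)).prod
              = ((-1:ℤ) ^ (∑ i, if ε i then 0 else 1)) •
                (List.ofFn fun i : Fin r =>
                  if ε i then b (i.1 + lam i.rev - 1) else b (i.1 + lam i.rev)).prod := by
            rw [← sign_prod' r ε, ← ofFn_prod_smul r (fun i => if ε i then (1:ℤ) else -1)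
                (fun i => if ε i then b (i.1 + lam i.rev - 1) else b (i.1 + lam i.rev))]
            exact congrArg List.prod (congrArg List.ofFn (funext fun i => by
              cases hε : ε i <;> simp [hε]))
          rw [hd, eA, eB]
          by_cases hc : (∑ i, if ε i then 1 else 0) = n
          · rw [if_pos hc, if_pos (show (∑ i, if ε i then 0 else 1) = r - n by omega),
              smul_smul, hc]
            congr 1
            rw [show (∑ i, if ε i then 0 else 1) = r - n from by omega, ← pow_add,
              show r + (r - n) = n + 2*(r - n) from by omega, pow_add, pow_mul]
            norm_num
          · rw [if_neg hc,
              if_neg (show ¬((∑ i, if ε i then 0 else 1) = r - n) from by omega),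
              smul_zero]
        · rw [if_pos hk0, if_neg hkr, hexp_m ((-k).toNat)]
          exact Finset.sum_eq_zero (fun ε _ =>
            if_neg (fun hc : (∑ i, if ε i then 1 else 0) = (-k).toNat => by
              have := cnt_le r ε; omega))
      · rw [if_neg hk0, if_pos (show -(r:ℤ) ≤ k by omega), hXX,
          hexp_X ((k + (r:ℤ)).toNat),
          Finset.sum_eq_zero (fun (ε : Fin r → Bool) _ =>
            if_neg (fun hc : (∑ i, if ε i then 1 else 0) = (k + (r:ℤ)).toNat => by
              have := cnt_le r ε; omega)), smul_zero]
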